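/- arXiv:1703.01670 — 7 statements merged into one kernel-verified Lean document; each statement's English description precedes it below -/
import Mathlib

section
/- Let H be the space ℓ²(ℕ, ℝ^p) of square-summable sequences with values in ℝ^p, and let P, K : H → H be maps satisfying P(0)=0, K(0)=0, and gain bounds ‖P u‖ ≤ γ_P ‖u‖ and ‖K v‖ ≤ γ_K ‖v‖ for all u, v ∈ H, where γ_P, γ_K ≥ 0 and γ_P γ_K < 1. If u, v, r, e ∈ H satisfy the feedback equations v = P u + e and u = K v + r, then ‖u‖ ≤ (‖r‖ + γ_K ‖e‖)/(1 - γ_P γ_K) and ‖v‖ ≤ (‖e‖ + γ_P ‖r‖)/(1 - γ_P γ_K). -/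
/-! The two gain bounds give the coupled linear inequalities `‖u‖ ≤ γK ‖v‖ + ‖r‖` and
`‖v‖ ≤ γP ‖u‖ + ‖e‖`; substituting one into the other and using `γP γK < 1` solves them. -/

theorem le_div_one_sub_mul_of_le_add {a b c d α β : ℝ} (hβ : 0 ≤ β) (hαβ : α * β < 1)
    (ha : a ≤ β * b + c) (hb : b ≤ α * a + d) : a ≤ (c + β * d) / (1 - α * β) := by
  rw [le_div_iff₀ (by linarith)]
  nlinarith [mul_le_mul_of_nonneg_left hb hβ]

section Feedback

variable {E : Type*} [SeminormedAddGroup E]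

theorem norm_le_gain_mul_add {P : E → E} {γ : ℝ} (hP : ∀ u, ‖P u‖ ≤ γ * ‖u‖)
    {u v e : E} (hv : v = P u + e) : ‖v‖ ≤ γ * ‖u‖ + ‖e‖ :=
  hv ▸ (norm_add_le _ _).trans (add_le_add_left (hP u) _)

theorem norm_le_of_feedback {P K : E → E} {γP γK : ℝ} (hγK : 0 ≤ γK) (hsmall : γP * γK < 1)
    (hP : ∀ u, ‖P u‖ ≤ γP * ‖u‖) (hK : ∀ v, ‖K v‖ ≤ γK * ‖v‖)
    {u v r e : E} (hv : v = P u + e) (hu : u = K v + r) :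
    ‖u‖ ≤ (‖r‖ + γK * ‖e‖) / (1 - γP * γK) :=
  le_div_one_sub_mul_of_le_add hγK hsmall (norm_le_gain_mul_add hK hu)
    (norm_le_gain_mul_add hP hv)

end Feedback

theorem small_gain_quantitative_general (p : ℕ)
    (P K : lp (fun _ : ℕ => EuclideanSpace ℝ (Fin p)) 2 →
           lp (fun _ : ℕ => EuclideanSpace ℝ (Fin p)) 2)
    (γP γK : ℝ) (hγP : 0 ≤ γP) (hγK : 0 ≤ γK) (hsmall : γP * γK < 1)
    (hPgain : ∀ u, ‖P u‖ ≤ γP * ‖u‖) (hKgain : ∀ v, ‖K v‖ ≤ γK * ‖v‖)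
    (u v r e : lp (fun _ : ℕ => EuclideanSpace ℝ (Fin p)) 2)
    (hv : v = P u + e) (hu : u = K v + r) :
    ‖u‖ ≤ (‖r‖ + γK * ‖e‖) / (1 - γP * γK) ∧
    ‖v‖ ≤ (‖e‖ + γP * ‖r‖) / (1 - γP * γK) := by
  refine ⟨norm_le_of_feedback hγK hsmall hPgain hKgain hv hu, ?_⟩
  rw [mul_comm γP γK] at hsmall ⊢
  exact norm_le_of_feedback hγP hsmall hKgain hPgain hu hv

/-- **Small gain theorem (quantitative form).**
Let `H = ℓ²(ℕ, ℝ^p)`, and let `P, K : H → H` map zero to zero with gain bounds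
`‖P u‖ ≤ γP ‖u‖` and `‖K v‖ ≤ γK ‖v‖`, where `γP, γK ≥ 0` and `γP * γK < 1`.
If `v = P u + e` and `u = K v + r`, then
`‖u‖ ≤ (‖r‖ + γK ‖e‖) / (1 - γP γK)` and `‖v‖ ≤ (‖e‖ + γP ‖r‖) / (1 - γP γK)`. -/
theorem small_gain_quantitative (p : ℕ)
    (P K : lp (fun _ : ℕ => EuclideanSpace ℝ (Fin p)) 2 →
           lp (fun _ : ℕ => EuclideanSpace ℝ (Fin p)) 2)
    (γP γK : ℝ) (hγP : 0 ≤ γP) (hγK : 0 ≤ γK) (hsmall : γP * γK < 1)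
    (hP0 : P 0 = 0) (hK0 : K 0 = 0)
    (hPgain : ∀ u, ‖P u‖ ≤ γP * ‖u‖) (hKgain : ∀ v, ‖K v‖ ≤ γK * ‖v‖)
    (u v r e : lp (fun _ : ℕ => EuclideanSpace ℝ (Fin p)) 2)
    (hv : v = P u + e) (hu : u = K v + r) :
    ‖u‖ ≤ (‖r‖ + γK * ‖e‖) / (1 - γP * γK) ∧
    ‖v‖ ≤ (‖e‖ + γP * ‖r‖) / (1 - γP * γK) :=
  small_gain_quantitative_general p P K γP γK hγP hγK hsmall hPgain hKgain u v r e hv hu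
end

section
/- Let E be a real inner product space and let 0 < m ≤ L be real numbers. For any vectors e, g ∈ E, the following are equivalent: (i) (L + m)·⟨e, g⟩ ≥ m·L·‖e‖² + ‖g‖²; (ii) ‖g − ((L + m)/2)·e‖ ≤ ((L − m)/2)·‖e‖. -/
/-!
With `c = (L + m)/2` and `r = (L - m)/2` one has `2c = L + m` and `c² - r² = m L`, so expanding
`‖g - c e‖² ≤ r² ‖e‖²` gives exactly the sector bound; taking square roots is harmless since
`r ≥ 0`.
-/

open RealInnerProductSpace

section

variable {E : Type*} [NormedAddCommGroup E] [InnerProductSpace ℝ E]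

theorem norm_sub_smul_sq_real (c : ℝ) (e g : E) :
    ‖g - c • e‖ ^ 2 = ‖g‖ ^ 2 - 2 * c * ⟪e, g⟫ + c ^ 2 * ‖e‖ ^ 2 := by
  rw [norm_sub_sq_real, norm_smul, real_inner_smul_right, real_inner_comm, mul_pow,
    Real.norm_eq_abs, sq_abs]
  ring

theorem norm_sub_smul_le_iff {r : ℝ} (hr : 0 ≤ r) (c : ℝ) (e g : E) :
    ‖g - c • e‖ ≤ r * ‖e‖ ↔ ‖g‖ ^ 2 + (c ^ 2 - r ^ 2) * ‖e‖ ^ 2 ≤ 2 * c * ⟪e, g⟫ := by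
  rw [← pow_le_pow_iff_left₀ (norm_nonneg _) (by positivity) two_ne_zero,
    norm_sub_smul_sq_real]
  constructor <;> intro h <;> linarith

end

theorem sector_bound_iff_disk_general
    {E : Type*} [NormedAddCommGroup E] [InnerProductSpace ℝ E]
    (m L : ℝ) (hmL : m ≤ L) (e g : E) :
    (L + m) * ⟪e, g⟫ ≥ m * L * ‖e‖ ^ 2 + ‖g‖ ^ 2 ↔
      ‖g - ((L + m) / 2) • e‖ ≤ ((L - m) / 2) * ‖e‖ := by
  have hr : 0 ≤ (L - m) / 2 := by linarith
  have hcoef : ((L + m) / 2) ^ 2 - ((L - m) / 2) ^ 2 = m * L := by ring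
  rw [norm_sub_smul_le_iff hr, hcoef, ge_iff_le, add_comm,
    mul_div_cancel₀ _ two_ne_zero]

/-- The sector-bound condition `(L + m) ⟪e, g⟫ ≥ m L ‖e‖² + ‖g‖²` is equivalent to the
disk condition `‖g − ((L + m)/2) e‖ ≤ ((L − m)/2) ‖e‖`. -/
theorem sector_bound_iff_disk
    {E : Type*} [NormedAddCommGroup E] [InnerProductSpace ℝ E]
    (m L : ℝ) (hm : 0 < m) (hmL : m ≤ L) (e g : E) :
    (L + m) * ⟪e, g⟫ ≥ m * L * ‖e‖ ^ 2 + ‖g‖ ^ 2 ↔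
      ‖g - ((L + m) / 2) • e‖ ≤ ((L - m) / 2) * ‖e‖ :=
  sector_bound_iff_disk_general m L hmL e g
end

section
/- Let E be a real inner product space, let 0 < m ≤ L, and let f : E → ℝ be differentiable with stationary point x⋆ (∇f(x⋆) = 0) such that for all x ∈ E, (L + m)·⟨x − x⋆, ∇f(x)⟩ ≥ m·L·‖x − x⋆‖² + ‖∇f(x)‖² (i.e. f ∈ S(m,L)). Then for every x ∈ E, ‖(x − x⋆) − (2/(L + m))·∇f(x)‖ ≤ ((L − m)/(L + m))·‖x − x⋆‖. -/
open RealInnerProductSpace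

/-- For `f ∈ S(m,L)` with stationary point `x⋆`, the loop-shifted plant
`u ↦ u − (2/(m+L)) ∇f(u + x⋆)` has pointwise gain at most `(L − m)/(L + m)`. -/
theorem shifted_plant_gain_bound
    {E : Type*} [NormedAddCommGroup E] [InnerProductSpace ℝ E] [CompleteSpace E]
    (m L : ℝ) (hm : 0 < m) (hmL : m ≤ L)
    (f : E → ℝ) (f' : E → E) (hf : ∀ x, HasGradientAt f (f' x) x)
    (xstar : E) (hstar : f' xstar = 0)
    (hsector : ∀ x : E,
      (L + m) * ⟪x - xstar, f' x⟫ ≥ m * L * ‖x - xstar‖ ^ 2 + ‖f' x‖ ^ 2) :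
    ∀ x : E, ‖(x - xstar) - (2 / (L + m)) • f' x‖ ≤ ((L - m) / (L + m)) * ‖x - xstar‖ := by
  intro x
  have hLm : 0 < L + m := by linarith
  have hne : (L + m) ≠ 0 := ne_of_gt hLm
  set u := x - xstar
  set g := f' x
  have hs := hsector x
  have hexp : ‖u - (2 / (L + m)) • g‖ ^ 2
      = ‖u‖ ^ 2 - 2 * ((2 / (L + m)) * ⟪u, g⟫) + (2 / (L + m)) ^ 2 * ‖g‖ ^ 2 := by
    rw [norm_sub_sq_real, inner_smul_right, norm_smul]
    have : |2 / (L + m)| = 2 / (L + m) := abs_of_pos (by positivity)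
    simp only [Real.norm_eq_abs, this]
    ring
  have hsq : ‖u - (2 / (L + m)) • g‖ ^ 2 ≤ (((L - m) / (L + m)) * ‖u‖) ^ 2 := by
    rw [hexp]
    have hpos : (0:ℝ) < (L + m) ^ 2 := by positivity
    rw [← mul_le_mul_iff_right₀ hpos]
    have e2 : (L + m) ^ 2 * (((L - m) / (L + m)) * ‖u‖) ^ 2 = (L - m) ^ 2 * ‖u‖ ^ 2 := by
      field_simp
    have e3 : (L + m) ^ 2 * (‖u‖ ^ 2 - 2 * ((2 / (L + m)) * ⟪u, g⟫)
        + (2 / (L + m)) ^ 2 * ‖g‖ ^ 2)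
        = (L + m) ^ 2 * ‖u‖ ^ 2 - 4 * ((L + m) * ⟪u, g⟫) + 4 * ‖g‖ ^ 2 := by
      field_simp; ring
    rw [e2, e3]
    nlinarith [hs]
  have h0 : (0:ℝ) ≤ ((L - m) / (L + m)) * ‖u‖ :=
    mul_nonneg (div_nonneg (by linarith) hLm.le) (norm_nonneg _)
  exact (pow_le_pow_iff_left₀ (norm_nonneg _) h0 two_ne_zero).mp hsq
end

section
/- Let E be a real inner product space, let 0 < m ≤ L, and let f : E → ℝ be differentiable with stationary point x⋆ (∇f(x⋆) = 0) such that for all x ∈ E, (L + m)·⟨x − x⋆, ∇f(x)⟩ ≥ m·L·‖x − x⋆‖² + ‖∇f(x)‖² (i.e. f ∈ S(m,L)). Then for every stepsize α > 0 and every x ∈ E, ‖x − α·∇f(x) − x⋆‖ ≤ max(|1 − α·m|, |1 − α·L|)·‖x − x⋆‖. -/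
/-!
Write `u = x - x⋆` and `g = ∇f(x)`. The sector condition says exactly that
`⟪L u - g, g - m u⟫ ≥ 0`. For `m < L` this splits `u = a + b` with
`a = (L u - g)/(L - m)`, `b = (g - m u)/(L - m)` and `⟪a, b⟫ ≥ 0`, and then
`u - α g = (1 - α m) a + (1 - α L) b`. A combination `p a + q b` of vectors with nonnegative
inner product has norm at most `max |p| |q| * ‖a + b‖`, since `p², q², p q ≤ max |p| |q| ²`.
For `m = L` the sector condition forces `g = m u`.
-/

open RealInnerProductSpace

section

variable {E : Type*} [NormedAddCommGroup E] [InnerProductSpace ℝ E]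

theorem norm_smul_add_smul_le_max_mul_norm_add {a b : E} (hab : 0 ≤ ⟪a, b⟫) (p q : ℝ) :
    ‖p • a + q • b‖ ≤ max |p| |q| * ‖a + b‖ := by
  set ρ := max |p| |q|
  have hρ : 0 ≤ ρ := (abs_nonneg p).trans (le_max_left _ _)
  have hp : p ^ 2 ≤ ρ ^ 2 := by
    simpa only [sq_abs] using pow_le_pow_left₀ (abs_nonneg p) (le_max_left |p| |q|) 2
  have hq : q ^ 2 ≤ ρ ^ 2 := by
    simpa only [sq_abs] using pow_le_pow_left₀ (abs_nonneg q) (le_max_right |p| |q|) 2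
  have hpq : p * q ≤ ρ ^ 2 := calc
    p * q ≤ |p| * |q| := by rw [← abs_mul]; exact le_abs_self _
    _ ≤ ρ * ρ := mul_le_mul (le_max_left _ _) (le_max_right _ _) (abs_nonneg q) hρ
    _ = ρ ^ 2 := (sq ρ).symm
  have hsq : ‖p • a + q • b‖ ^ 2 ≤ (ρ * ‖a + b‖) ^ 2 := by
    rw [mul_pow, norm_add_sq_real, norm_add_sq_real, norm_smul, norm_smul,
      inner_smul_left, inner_smul_right, mul_pow, mul_pow, Real.norm_eq_abs, Real.norm_eq_abs,
      sq_abs, sq_abs, conj_trivial]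
    nlinarith [mul_le_mul_of_nonneg_right hp (sq_nonneg ‖a‖),
      mul_le_mul_of_nonneg_right hq (sq_nonneg ‖b‖), mul_le_mul_of_nonneg_right hpq hab]
  exact pow_le_pow_iff_left₀ (norm_nonneg _) (by positivity) two_ne_zero |>.mp hsq

theorem inner_sub_smul_sub_smul_eq (m L : ℝ) (u g : E) :
    ⟪L • u - g, g - m • u⟫ = (L + m) * ⟪u, g⟫ - (m * L * ‖u‖ ^ 2 + ‖g‖ ^ 2) := by
  simp only [inner_sub_left, inner_sub_right, inner_smul_left, inner_smul_right,
    real_inner_self_eq_norm_sq, real_inner_comm u g, conj_trivial]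
  ring

theorem norm_sub_smul_le_of_inner_nonneg {m L : ℝ} (hmL : m ≤ L) {u g : E}
    (hsector : 0 ≤ ⟪L • u - g, g - m • u⟫) (α : ℝ) :
    ‖u - α • g‖ ≤ max |1 - α * m| |1 - α * L| * ‖u‖ := by
  rcases hmL.eq_or_lt with rfl | hlt
  · have hg : g = m • u := by
      rw [← neg_sub, inner_neg_left, real_inner_self_eq_norm_sq] at hsector
      exact sub_eq_zero.mp (norm_eq_zero.mp (by nlinarith [norm_nonneg (g - m • u)]))
    have hstep : u - α • m • u = (1 - α * m) • u := by module
    rw [hg, hstep, norm_smul, Real.norm_eq_abs, max_self]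
  · have hLm : 0 < L - m := sub_pos.mpr hlt
    set a := (L - m)⁻¹ • (L • u - g)
    set b := (L - m)⁻¹ • (g - m • u)
    have hab : 0 ≤ ⟪a, b⟫ := by
      simp only [a, b, inner_smul_left, inner_smul_right, conj_trivial]
      have hinv := inv_nonneg.mpr hLm.le
      exact mul_nonneg hinv (mul_nonneg hinv hsector)
    have hsum : a + b = u := by
      match_scalars <;> field_simp <;> ring
    have hstep : (1 - α * m) • a + (1 - α * L) • b = u - α • g := by
      match_scalars <;> field_simp <;> ring
    rw [← hstep, ← hsum]
    exact norm_smul_add_smul_le_max_mul_norm_add hab _ _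

end

theorem gradient_step_contraction_general
    {E : Type*} [NormedAddCommGroup E] [InnerProductSpace ℝ E]
    (m L : ℝ) (hmL : m ≤ L)
    (f' : E → E)
    (xstar : E)
    (hsector : ∀ x : E,
      (L + m) * ⟪x - xstar, f' x⟫ ≥ m * L * ‖x - xstar‖ ^ 2 + ‖f' x‖ ^ 2)
    (α : ℝ) :
    ∀ x : E, ‖x - α • f' x - xstar‖ ≤ max |1 - α * m| |1 - α * L| * ‖x - xstar‖ := by
  intro x
  have hinner : 0 ≤ ⟪L • (x - xstar) - f' x, f' x - m • (x - xstar)⟫ := by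
    rw [inner_sub_smul_sub_smul_eq]
    exact sub_nonneg.mpr (hsector x)
  rw [sub_right_comm]
  exact norm_sub_smul_le_of_inner_nonneg hmL hinner α

/-- For `f ∈ S(m,L)` with stationary point `x⋆`, one step of gradient descent with any
stepsize `α > 0` is a contraction with factor `max |1 − αm| |1 − αL|`. -/
theorem gradient_step_contraction
    {E : Type*} [NormedAddCommGroup E] [InnerProductSpace ℝ E] [CompleteSpace E]
    (m L : ℝ) (hm : 0 < m) (hmL : m ≤ L)
    (f : E → ℝ) (f' : E → E) (hf : ∀ x, HasGradientAt f (f' x) x)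
    (xstar : E) (hstar : f' xstar = 0)
    (hsector : ∀ x : E,
      (L + m) * ⟪x - xstar, f' x⟫ ≥ m * L * ‖x - xstar‖ ^ 2 + ‖f' x‖ ^ 2)
    (α : ℝ) (hα : 0 < α) :
    ∀ x : E, ‖x - α • f' x - xstar‖ ≤ max |1 - α * m| |1 - α * L| * ‖x - xstar‖ :=
  gradient_step_contraction_general m L hmL f' xstar hsector α
end

section
/- Let E be a real inner product space, let 0 < m ≤ L, and let f : E → ℝ be differentiable with stationary point x⋆ (∇f(x⋆) = 0) such that for all x ∈ E, (L + m)·⟨x − x⋆, ∇f(x)⟩ ≥ m·L·‖x − x⋆‖² + ‖∇f(x)‖² (i.e. f ∈ S(m,L)). If the sequence (x^k) satisfies the gradient descent iteration x^{k+1} = x^k − (2/(L + m))·∇f(x^k) for all k ≥ 0, then for all k ≥ 0, ‖x^k − x⋆‖ ≤ ((L − m)/(L + m))^k · ‖x^0 − x⋆‖. -/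
open RealInnerProductSpace

/-!
Write `d = x - x⋆` and `g = ∇f(x)`. Expanding the square, `(L + m)² ‖d - 2/(L + m) • g‖²` equals
`(L + m)² ‖d‖² - 4 ((L + m) ⟪d, g⟫ - ‖g‖²)`, and the sector condition bounds the bracket below by
`m L ‖d‖²`; since `(L + m)² - 4 m L = (L - m)²`, one gradient step contracts the distance to `x⋆`
by the factor `(L - m)/(L + m)`, and induction gives the geometric rate.
-/

theorem norm_sub_smul_le_of_sector {E : Type*} [NormedAddCommGroup E] [InnerProductSpace ℝ E]
    {m L : ℝ} (hLm : 0 < L + m) (hmL : m ≤ L) {d g : E}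
    (hsector : (L + m) * ⟪d, g⟫ ≥ m * L * ‖d‖ ^ 2 + ‖g‖ ^ 2) :
    ‖d - (2 / (L + m)) • g‖ ≤ (L - m) / (L + m) * ‖d‖ := by
  have hsq : ((L + m) * ‖d - (2 / (L + m)) • g‖) ^ 2 ≤ ((L - m) * ‖d‖) ^ 2 :=
    calc ((L + m) * ‖d - (2 / (L + m)) • g‖) ^ 2
        = ((L + m) * ‖d‖) ^ 2 - 4 * ((L + m) * ⟪d, g⟫ - ‖g‖ ^ 2) := by
          rw [mul_pow, norm_sub_sq_real, real_inner_smul_right, norm_smul, mul_pow,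
            Real.norm_eq_abs, sq_abs]
          field_simp
          ring
      _ ≤ ((L + m) * ‖d‖) ^ 2 - 4 * (m * L * ‖d‖ ^ 2) := by linarith
      _ = ((L - m) * ‖d‖) ^ 2 := by ring
  rw [div_mul_eq_mul_div, le_div_iff₀' hLm]
  exact (pow_le_pow_iff_left₀ (by positivity)
    (mul_nonneg (sub_nonneg.2 hmL) (norm_nonneg d)) two_ne_zero).1 hsq

theorem gradient_descent_rate_optimal_stepsize_general
    {E : Type*} [NormedAddCommGroup E] [InnerProductSpace ℝ E]
    (m L : ℝ) (hm : 0 < m) (hmL : m ≤ L)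
    (f' : E → E)
    (xstar : E)
    (hsector : ∀ x : E,
      (L + m) * ⟪x - xstar, f' x⟫ ≥ m * L * ‖x - xstar‖ ^ 2 + ‖f' x‖ ^ 2)
    (x : ℕ → E) (hiter : ∀ k : ℕ, x (k + 1) = x k - (2 / (L + m)) • f' (x k)) :
    ∀ k : ℕ, ‖x k - xstar‖ ≤ ((L - m) / (L + m)) ^ k * ‖x 0 - xstar‖ := by
  have hLm : 0 < L + m := by linarith
  have hrate : 0 ≤ (L - m) / (L + m) := div_nonneg (sub_nonneg.2 hmL) hLm.le
  intro k
  refine le_geom (u := fun k => ‖x k - xstar‖) hrate k fun j _ => ?_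
  rw [hiter j, sub_right_comm]
  exact norm_sub_smul_le_of_sector hLm hmL (hsector (x j))

/-- For `f ∈ S(m,L)` with stationary point `x⋆`, gradient descent with stepsize
`α = 2/(L+m)` converges linearly at rate `(L − m)/(L + m)`. -/
theorem gradient_descent_rate_optimal_stepsize
    {E : Type*} [NormedAddCommGroup E] [InnerProductSpace ℝ E] [CompleteSpace E]
    (m L : ℝ) (hm : 0 < m) (hmL : m ≤ L)
    (f : E → ℝ) (f' : E → E) (hf : ∀ x, HasGradientAt f (f' x) x)
    (xstar : E) (hstar : f' xstar = 0)
    (hsector : ∀ x : E,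
      (L + m) * ⟪x - xstar, f' x⟫ ≥ m * L * ‖x - xstar‖ ^ 2 + ‖f' x‖ ^ 2)
    (x : ℕ → E) (hiter : ∀ k : ℕ, x (k + 1) = x k - (2 / (L + m)) • f' (x k)) :
    ∀ k : ℕ, ‖x k - xstar‖ ≤ ((L - m) / (L + m)) ^ k * ‖x 0 - xstar‖ :=
  gradient_descent_rate_optimal_stepsize_general m L hm hmL f' xstar hsector x hiter
end

section
/- Let E be a real inner product space, let 0 < m ≤ L, and let f : E → ℝ be differentiable with stationary point x⋆ (∇f(x⋆) = 0) such that for all x ∈ E, (L + m)·⟨x − x⋆, ∇f(x)⟩ ≥ m·L·‖x − x⋆‖² + ‖∇f(x)‖² (i.e. f ∈ S(m,L)). If the sequence (x^k) satisfies the gradient descent iteration x^{k+1} = x^k − (1/L)·∇f(x^k) for all k ≥ 0, then for all k ≥ 0, ‖x^k − x⋆‖ ≤ (1 − m/L)^k · ‖x^0 − x⋆‖. -/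
open RealInnerProductSpace

lemma gd_step_contract {E : Type*} [NormedAddCommGroup E] [InnerProductSpace ℝ E]
    (m L : ℝ) (hm : 0 < m) (hmL : m ≤ L) (y g : E)
    (hsec : (L + m) * ⟪y, g⟫ ≥ m * L * ‖y‖ ^ 2 + ‖g‖ ^ 2) :
    ‖y - (1 / L) • g‖ ≤ (1 - m / L) * ‖y‖ := by
  have hL : 0 < L := lt_of_lt_of_le hm hmL
  have hcs : ⟪y, g⟫ ≤ ‖y‖ * ‖g‖ := real_inner_le_norm y g
  have hfac : (‖g‖ - m * ‖y‖) * (‖g‖ - L * ‖y‖) ≤ 0 := by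
    nlinarith [mul_le_mul_of_nonneg_left hcs (by linarith : (0:ℝ) ≤ L + m)]
  have hu : m * ‖y‖ ≤ ‖g‖ := by
    by_contra h
    push_neg at h
    have hml : m * ‖y‖ ≤ L * ‖y‖ := mul_le_mul_of_nonneg_right hmL (norm_nonneg y)
    nlinarith [mul_pos (by linarith : (0:ℝ) < m * ‖y‖ - ‖g‖)
      (by linarith : (0:ℝ) < L * ‖y‖ - ‖g‖)]
  have hg : m ^ 2 * ‖y‖ ^ 2 ≤ ‖g‖ ^ 2 := by
    nlinarith [hu, mul_nonneg hm.le (norm_nonneg y)]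
  have hexp : ‖y - (1 / L) • g‖ ^ 2
      = ‖y‖ ^ 2 - 2 * (1 / L) * ⟪y, g⟫ + (1 / L) ^ 2 * ‖g‖ ^ 2 := by
    rw [norm_sub_sq_real, real_inner_smul_right, norm_smul]
    simp [abs_of_pos hL]
    ring
  have key : m * (2 * L - m) * ‖y‖ ^ 2 + ‖g‖ ^ 2 ≤ 2 * L * ⟪y, g⟫ := by
    nlinarith [norm_nonneg y, norm_nonneg g]
  have hL2 : (0:ℝ) < L ^ 2 := by positivity
  have hsq2 : ‖y - (1 / L) • g‖ ^ 2 * L ^ 2 ≤ ((1 - m / L) * ‖y‖) ^ 2 * L ^ 2 := by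
    have h2 : ((1 - m / L) * ‖y‖) ^ 2 * L ^ 2 = (L - m) ^ 2 * ‖y‖ ^ 2 := by
      field_simp
    have h3 : ‖y - (1 / L) • g‖ ^ 2 * L ^ 2
        = ‖y‖ ^ 2 * L ^ 2 - 2 * L * ⟪y, g⟫ + ‖g‖ ^ 2 := by
      rw [hexp]; field_simp
    rw [h2, h3]; nlinarith [key, hg]
  have hsq : ‖y - (1 / L) • g‖ ^ 2 ≤ ((1 - m / L) * ‖y‖) ^ 2 :=
    le_of_mul_le_mul_right (by linarith [hsq2]) hL2
  have hrhs : 0 ≤ (1 - m / L) * ‖y‖ := by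
    have : m / L ≤ 1 := (div_le_one hL).mpr hmL
    have := norm_nonneg y
    nlinarith
  nlinarith [norm_nonneg (y - (1 / L) • g)]

/-- For `f ∈ S(m,L)` with stationary point `x⋆`, gradient descent with stepsize
`α = 1/L` converges linearly at rate `1 − m/L`. -/
theorem gradient_descent_rate_stepsize_one_over_L
    {E : Type*} [NormedAddCommGroup E] [InnerProductSpace ℝ E] [CompleteSpace E]
    (m L : ℝ) (hm : 0 < m) (hmL : m ≤ L)
    (f : E → ℝ) (f' : E → E) (hf : ∀ x, HasGradientAt f (f' x) x)
    (xstar : E) (hstar : f' xstar = 0)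
    (hsector : ∀ x : E,
      (L + m) * ⟪x - xstar, f' x⟫ ≥ m * L * ‖x - xstar‖ ^ 2 + ‖f' x‖ ^ 2)
    (x : ℕ → E) (hiter : ∀ k : ℕ, x (k + 1) = x k - (1 / L) • f' (x k)) :
    ∀ k : ℕ, ‖x k - xstar‖ ≤ (1 - m / L) ^ k * ‖x 0 - xstar‖ := by
  have hL : 0 < L := lt_of_lt_of_le hm hmL
  have hrho : 0 ≤ 1 - m / L := by
    have : m / L ≤ 1 := (div_le_one hL).mpr hmL
    linarith
  intro k
  induction k with
  | zero => simp
  | succ k ih =>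
      have step : ‖x (k + 1) - xstar‖ ≤ (1 - m / L) * ‖x k - xstar‖ := by
        have := gd_step_contract m L hm hmL (x k - xstar) (f' (x k)) (hsector (x k))
        calc ‖x (k + 1) - xstar‖
            = ‖(x k - xstar) - (1 / L) • f' (x k)‖ := by
              rw [hiter k]; congr 1; abel
          _ ≤ (1 - m / L) * ‖x k - xstar‖ := this
      calc ‖x (k + 1) - xstar‖ ≤ (1 - m / L) * ‖x k - xstar‖ := step
        _ ≤ (1 - m / L) * ((1 - m / L) ^ k * ‖x 0 - xstar‖) := by
            exact mul_le_mul_of_nonneg_left ih hrho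
        _ = (1 - m / L) ^ (k + 1) * ‖x 0 - xstar‖ := by ring
end

section
/- Let E = ℝ^n with the Euclidean inner product, let 0 < m ≤ L, let Q : E → E be a symmetric linear map with m·‖x‖² ≤ ⟨x, Q x⟩ ≤ L·‖x‖² for all x, let b ∈ E, and let x⋆ be the unique point with Q x⋆ = b (the minimizer of the quadratic f(x) = (1/2)⟨x, Q x⟩ − ⟨b, x⟩). Set α = 4/(√L + √m)² and β = ((√L − √m)/(√L + √m))². Then for every ρ with √β < ρ < 1, there exists c > 0 such that every sequence (x^k) satisfying the Heavy-ball iteration x^{k+1} = x^k − α·(Q x^k − b) + β·(x^k − x^{k−1}) for all k ≥ 1 obeys ‖x^k − x⋆‖ ≤ c·ρ^k·(‖x^0 − x⋆‖ + ‖x^1 − x⋆‖) for all k ≥ 0. -/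
open RealInnerProductSpace

/-!
The error `e k = x k - x⋆` satisfies `e (k + 2) = A e (k + 1) - β e k` with the self-adjoint
`A = (1 + β) - α Q`. The tuning gives `1 + β - α m = 2√β` and `1 + β - α L = -2√β`, so the
numerical range, hence the norm, of `A` is at most `2√β`. For such a recurrence the energy
`β ‖e k‖² + ‖e (k + 1)‖² - ⟪e k, A e (k + 1)⟫` is multiplied by `β` at every step and lies
between `(‖e (k + 1)‖ ∓ √β ‖e k‖)²`; hence `‖e (k + 1)‖ ≤ √β ‖e k‖ + √β ^ k C` with
`C = ‖e 0‖ + ‖e 1‖`, which sums to `‖e k‖ ≤ ρ ^ k C / (ρ - √β)` for every `√β < ρ ≤ 1`.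
-/

section TwoStepRecurrence

variable {E : Type*} [NormedAddCommGroup E] [InnerProductSpace ℝ E]

theorem ContinuousLinearMap.norm_le_of_abs_inner_self_le {T : E →L[ℝ] E} (hT : T.IsSymmetric)
    {M : ℝ} (hM : 0 ≤ M) (h : ∀ x, |⟪T x, x⟫| ≤ M * ‖x‖ ^ 2) : ‖T‖ ≤ M := by
  rw [T.norm_eq_iSup_rayleighQuotient hT]
  refine ciSup_le fun x => ?_
  rcases eq_or_ne x 0 with rfl | hx
  · simpa using hM
  · rw [rayleighQuotient, reApplyInnerSelf_apply, RCLike.re_to_real, abs_div, abs_sq,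
      div_le_iff₀ (by positivity)]
    exact h x

theorem abs_inner_smul_sub_smul_apply_self_le {Q : E →ₗ[ℝ] E} {m L : ℝ}
    (hQlb : ∀ x, m * ‖x‖ ^ 2 ≤ ⟪x, Q x⟫) (hQub : ∀ x, ⟪x, Q x⟫ ≤ L * ‖x‖ ^ 2)
    {α γ r : ℝ} (hα : 0 ≤ α) (hm : |γ - α * m| ≤ r) (hL : |γ - α * L| ≤ r) (x : E) :
    |⟪γ • x - α • Q x, x⟫| ≤ r * ‖x‖ ^ 2 := by
  rw [inner_sub_left, real_inner_smul_left, real_inner_smul_left, real_inner_self_eq_norm_sq,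
    real_inner_comm]
  have hx := sq_nonneg ‖x‖
  have hlb := mul_le_mul_of_nonneg_left (hQlb x) hα
  have hub := mul_le_mul_of_nonneg_left (hQub x) hα
  rw [abs_le] at hm hL ⊢
  constructor <;> nlinarith [hm.1, hm.2, hL.1, hL.2]

theorem le_pow_div_sub_mul_of_le_mul_add {w : ℕ → ℝ} {t ρ D : ℝ} (ht : 0 ≤ t) (htρ : t < ρ)
    (hρ : ρ ≤ 1) (hD : 0 ≤ D) (h0 : w 0 ≤ D) (hw : ∀ k, w (k + 1) ≤ t * w k + t ^ k * D)
    (k : ℕ) : w k ≤ ρ ^ k / (ρ - t) * D := by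
  have hρt : 0 < ρ - t := sub_pos.mpr htρ
  induction k with
  | zero =>
    rw [pow_zero, one_div_mul_eq_div, le_div_iff₀ hρt]
    nlinarith
  | succ k ih =>
    calc w (k + 1) ≤ t * (ρ ^ k / (ρ - t) * D) + ρ ^ k * D :=
          (hw k).trans (add_le_add (mul_le_mul_of_nonneg_left ih ht) (by gcongr))
      _ = ρ ^ (k + 1) / (ρ - t) * D := by field_simp; ring

def twoStepEnergy (A : E →ₗ[ℝ] E) (s : ℝ) (x y : E) : ℝ :=
  s * ‖x‖ ^ 2 + ‖y‖ ^ 2 - ⟪x, A y⟫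

theorem twoStepEnergy_succ {A : E →ₗ[ℝ] E} (hA : A.IsSymmetric) {s : ℝ} {u : ℕ → E}
    (hu : ∀ k, u (k + 2) = A (u (k + 1)) - s • u k) (k : ℕ) :
    twoStepEnergy A s (u (k + 1)) (u (k + 2)) = s * twoStepEnergy A s (u k) (u (k + 1)) := by
  have key : ‖u (k + 2)‖ ^ 2 - ⟪u (k + 1), A (u (k + 2))⟫ =
      s ^ 2 * ‖u k‖ ^ 2 - s * ⟪u k, A (u (k + 1))⟫ := by
    rw [← hA, ← real_inner_self_eq_norm_sq, ← inner_sub_left, hu k, sub_sub_cancel_left,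
      inner_neg_left, inner_sub_right, real_inner_smul_left, real_inner_smul_left,
      real_inner_smul_right, real_inner_self_eq_norm_sq]
    ring
  unfold twoStepEnergy
  linear_combination key

theorem twoStepEnergy_eq_pow_mul {A : E →ₗ[ℝ] E} (hA : A.IsSymmetric) {s : ℝ} {u : ℕ → E}
    (hu : ∀ k, u (k + 2) = A (u (k + 1)) - s • u k) (k : ℕ) :
    twoStepEnergy A s (u k) (u (k + 1)) = s ^ k * twoStepEnergy A s (u 0) (u 1) := by
  induction k with
  | zero => simp
  | succ k ih => rw [twoStepEnergy_succ hA hu, ih, pow_succ']; ring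

theorem sq_sub_le_twoStepEnergy {A : E →ₗ[ℝ] E} {t : ℝ}
    (hA : ∀ x y, |⟪x, A y⟫| ≤ 2 * t * ‖x‖ * ‖y‖) (x y : E) :
    (‖y‖ - t * ‖x‖) ^ 2 ≤ twoStepEnergy A (t ^ 2) x y := by
  have := (abs_le.mp (hA x y)).2
  unfold twoStepEnergy
  nlinarith

theorem twoStepEnergy_le_sq_add {A : E →ₗ[ℝ] E} {t : ℝ}
    (hA : ∀ x y, |⟪x, A y⟫| ≤ 2 * t * ‖x‖ * ‖y‖) (x y : E) :
    twoStepEnergy A (t ^ 2) x y ≤ (‖y‖ + t * ‖x‖) ^ 2 := by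
  have := (abs_le.mp (hA x y)).1
  unfold twoStepEnergy
  nlinarith

theorem norm_succ_le_of_twoStep_rec {A : E →ₗ[ℝ] E} (hA : A.IsSymmetric) {t : ℝ} (ht : 0 ≤ t)
    (hAt : ∀ x y, |⟪x, A y⟫| ≤ 2 * t * ‖x‖ * ‖y‖) {u : ℕ → E}
    (hu : ∀ k, u (k + 2) = A (u (k + 1)) - t ^ 2 • u k) (k : ℕ) :
    ‖u (k + 1)‖ ≤ t * ‖u k‖ + t ^ k * (‖u 1‖ + t * ‖u 0‖) := by
  have hsq : (‖u (k + 1)‖ - t * ‖u k‖) ^ 2 ≤ (t ^ k * (‖u 1‖ + t * ‖u 0‖)) ^ 2 :=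
    calc (‖u (k + 1)‖ - t * ‖u k‖) ^ 2 ≤ twoStepEnergy A (t ^ 2) (u k) (u (k + 1)) :=
          sq_sub_le_twoStepEnergy hAt _ _
      _ = (t ^ 2) ^ k * twoStepEnergy A (t ^ 2) (u 0) (u 1) := twoStepEnergy_eq_pow_mul hA hu k
      _ ≤ (t ^ 2) ^ k * (‖u 1‖ + t * ‖u 0‖) ^ 2 := by
          gcongr; exact twoStepEnergy_le_sq_add hAt _ _
      _ = (t ^ k * (‖u 1‖ + t * ‖u 0‖)) ^ 2 := by ring
  have := (abs_le_of_sq_le_sq' hsq (by positivity)).2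
  linarith

theorem norm_le_pow_div_of_twoStep_rec {A : E →L[ℝ] E} (hA : A.IsSymmetric) {t ρ : ℝ}
    (ht : 0 ≤ t) (htρ : t < ρ) (hρ : ρ ≤ 1) (hAt : ∀ x, |⟪A x, x⟫| ≤ 2 * t * ‖x‖ ^ 2) {u : ℕ → E}
    (hu : ∀ k, u (k + 2) = A (u (k + 1)) - t ^ 2 • u k) (k : ℕ) :
    ‖u k‖ ≤ ρ ^ k / (ρ - t) * (‖u 0‖ + ‖u 1‖) := by
  have hnorm : ‖A‖ ≤ 2 * t := A.norm_le_of_abs_inner_self_le hA (by linarith) hAt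
  have hbilin (x y : E) : |⟪x, A y⟫| ≤ 2 * t * ‖x‖ * ‖y‖ :=
    calc |⟪x, A y⟫| ≤ ‖x‖ * ‖A y‖ := abs_real_inner_le_norm _ _
      _ ≤ ‖x‖ * (2 * t * ‖y‖) := by gcongr; exact A.le_of_opNorm_le hnorm y
      _ = 2 * t * ‖x‖ * ‖y‖ := by ring
  refine le_pow_div_sub_mul_of_le_mul_add (w := fun k => ‖u k‖) ht htρ hρ
    (add_nonneg (norm_nonneg _) (norm_nonneg _)) (le_add_of_nonneg_right (norm_nonneg _))
    (fun k => ?_) k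
  have ht1 : t ≤ 1 := htρ.le.trans hρ
  calc ‖u (k + 1)‖ ≤ t * ‖u k‖ + t ^ k * (‖u 1‖ + t * ‖u 0‖) :=
        norm_succ_le_of_twoStep_rec hA ht hbilin hu k
    _ ≤ t * ‖u k‖ + t ^ k * (‖u 0‖ + ‖u 1‖) := by
        have : t * ‖u 0‖ ≤ ‖u 0‖ := mul_le_of_le_one_left (norm_nonneg _) ht1
        gcongr t * ‖u k‖ + t ^ k * ?_
        linarith

end TwoStepRecurrence

theorem heavyBall_tuning_eq {p q : ℝ} (h : p + q ≠ 0) :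
    1 + ((p - q) / (p + q)) ^ 2 - 4 / (p + q) ^ 2 * q ^ 2 = 2 * ((p - q) / (p + q)) ∧
      1 + ((p - q) / (p + q)) ^ 2 - 4 / (p + q) ^ 2 * p ^ 2 = -(2 * ((p - q) / (p + q))) := by
  constructor <;> field_simp <;> ring

/-- Accelerated linear convergence of the Heavy-ball method for a strongly convex
quadratic `f(x) = (1/2)⟪x, Qx⟫ − ⟪b, x⟫` on `ℝ^n`, with the optimal tuning
`α = 4/(√L + √m)²`, `β = ((√L − √m)/(√L + √m))²`: for every `√β < ρ < 1` there is a
constant `c > 0` bounding `‖x^k − x⋆‖ ≤ c ρ^k (‖x^0 − x⋆‖ + ‖x^1 − x⋆‖)`. -/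
theorem heavy_ball_quadratic_rate
    (n : ℕ) (m L : ℝ) (hm : 0 < m) (hmL : m ≤ L)
    (Q : EuclideanSpace ℝ (Fin n) →ₗ[ℝ] EuclideanSpace ℝ (Fin n))
    (hQsymm : ∀ x y : EuclideanSpace ℝ (Fin n), ⟪Q x, y⟫ = ⟪x, Q y⟫)
    (hQlb : ∀ x : EuclideanSpace ℝ (Fin n), m * ‖x‖ ^ 2 ≤ ⟪x, Q x⟫)
    (hQub : ∀ x : EuclideanSpace ℝ (Fin n), ⟪x, Q x⟫ ≤ L * ‖x‖ ^ 2)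
    (b xstar : EuclideanSpace ℝ (Fin n)) (hstar : Q xstar = b)
    (α β : ℝ)
    (hαdef : α = 4 / (Real.sqrt L + Real.sqrt m) ^ 2)
    (hβdef : β = ((Real.sqrt L - Real.sqrt m) / (Real.sqrt L + Real.sqrt m)) ^ 2) :
    ∀ ρ : ℝ, Real.sqrt β < ρ → ρ < 1 →
      ∃ c : ℝ, 0 < c ∧
        ∀ x : ℕ → EuclideanSpace ℝ (Fin n),
          (∀ k : ℕ, 1 ≤ k → x (k + 1) = x k - α • (Q (x k) - b) + β • (x k - x (k - 1))) →
          ∀ k : ℕ, ‖x k - xstar‖ ≤ c * ρ ^ k * (‖x 0 - xstar‖ + ‖x 1 - xstar‖) := by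
  intro ρ htρ hρ
  subst hstar
  have hsum : 0 < √L + √m := by positivity
  have ht : √β = (√L - √m) / (√L + √m) :=
    hβdef ▸ Real.sqrt_sq (div_nonneg (sub_nonneg.mpr (Real.sqrt_le_sqrt hmL)) hsum.le)
  obtain ⟨hγm, hγL⟩ := heavyBall_tuning_eq (p := √L) (q := √m) hsum.ne'
  rw [Real.sq_sqrt hm.le] at hγm
  rw [Real.sq_sqrt (hm.le.trans hmL)] at hγL
  rw [← hαdef, ← hβdef, ← ht] at hγm hγL
  set t := √β
  let A := LinearMap.toContinuousLinearMap ((1 + β) • LinearMap.id - α • Q)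
  have hA : A.IsSymmetric := (LinearMap.IsSymmetric.id.smul (by simp)).sub
    (LinearMap.IsSymmetric.smul (by simp) hQsymm)
  have hAv (v : EuclideanSpace ℝ (Fin n)) : A v = (1 + β) • v - α • Q v := rfl
  have hAt (v : EuclideanSpace ℝ (Fin n)) : |⟪A v, v⟫| ≤ 2 * t * ‖v‖ ^ 2 :=
    abs_inner_smul_sub_smul_apply_self_le hQlb hQub (hαdef ▸ by positivity)
      (by rw [hγm, abs_of_nonneg (by positivity)])
      (by rw [hγL, abs_neg, abs_of_nonneg (by positivity)]) v
  refine ⟨1 / (ρ - t), by have := sub_pos.mpr htρ; positivity, fun x hx k => ?_⟩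
  have herr (k : ℕ) : x (k + 2) - xstar = A (x (k + 1) - xstar) - t ^ 2 • (x k - xstar) := by
    rw [Real.sq_sqrt (hβdef ▸ sq_nonneg _), hx (k + 1) (Nat.le_add_left 1 k), hAv,
      Nat.add_sub_cancel, map_sub]
    module
  simpa only [div_eq_mul_one_div (ρ ^ k), mul_comm (ρ ^ k)] using
    norm_le_pow_div_of_twoStep_rec (u := fun k => x k - xstar) hA (Real.sqrt_nonneg β) htρ hρ.le
      hAt herr k
end
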